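/- If an outcome W is not DF1, then there exists a project x_j ∉ W such that cover(W ∪ {x_j}) ≥ cover(W) + c(x_j), where cover is the total coverage function. -/

import Mathlib

open Finset

/-- Fractional feasibility for a single district with natural-valued welfare. -/
def FracFeasible {m : ℕ} (sw : Fin m → ℕ) (f : ℝ) (W : Finset (Fin m))
    (p : Fin m → ℝ) : Prop :=
  (∀ j, 0 ≤ p j ∧ p j ≤ 1) ∧ (∀ j ∈ W, p j = 0) ∧
    f ≤ (∑ j ∈ W, (sw j : ℝ)) + ∑ j, p j * (sw j : ℝ)

/-- Minimum cost of a feasible fractional completion for one district. -/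
noncomputable def resid {m : ℕ} (c : Fin m → ℝ) (sw : Fin m → ℕ) (f : ℝ)
    (W : Finset (Fin m)) : ℝ :=
  sInf ((fun p : Fin m → ℝ => ∑ j, p j * c j) '' {p | FracFeasible sw f W p})

/-- Total coverage of an outcome, summed over all districts. -/
noncomputable def coverTot {m k : ℕ} (c : Fin m → ℝ) (sw : Fin k → Fin m → ℕ)
    (f bd : Fin k → ℝ) (W : Finset (Fin m)) : ℝ :=
  ∑ i, (bd i - resid c (sw i) (f i) W)

/-- An outcome is district-fair up to one project. -/
def DF1 {m k : ℕ} (sw : Fin k → Fin m → ℕ) (f : Fin k → ℝ)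
    (W : Finset (Fin m)) : Prop :=
  ∀ i, f i ≤ (∑ j ∈ W, (sw i j : ℝ)) + (((Finset.univ \ W).sup (sw i) : ℕ) : ℝ)

/-!
Since `W` is not DF1, some district `i₀` cannot reach its fair share by adding any single
project. An optimal fractional completion `p` for `i₀` with at most one fractional coordinate
must therefore select some project `x ∉ W` in full: otherwise its welfare is at most that of one
project. Moving `x` into the outcome and deleting it from `p` leaves a feasible completion, so
`resid_{i₀}` drops by `c x`, while every other residual cost can only drop.
-/

section Coverage

variable {m : ℕ} (c : Fin m → ℝ) {sw : Fin m → ℕ} {f : ℝ}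

lemma sum_update_zero_mul (p g : Fin m → ℝ) (x : Fin m) :
    ∑ j, Function.update p x 0 j * g j = ∑ j, p j * g j - p x * g x := by
  rw [Fintype.sum_eq_add_sum_compl x (fun j => p j * g j), Fintype.sum_eq_add_sum_compl x,
    Function.update_self, zero_mul, zero_add, add_sub_cancel_left]
  refine sum_congr rfl fun j hj => ?_
  rw [Function.update_of_ne (by simpa using hj)]

lemma FracFeasible.update_insert {W : Finset (Fin m)} {p : Fin m → ℝ} {x : Fin m}
    (hp : FracFeasible sw f W p) (hx : x ∉ W) :
    FracFeasible sw f (insert x W) (Function.update p x 0) := by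
  obtain ⟨hbounds, hzero, hwelfare⟩ := hp
  refine ⟨fun j => ?_, fun j hj => ?_, ?_⟩
  · rcases eq_or_ne j x with rfl | h
    · simp
    · simpa [Function.update_of_ne h] using hbounds j
  · rcases eq_or_ne j x with rfl | h
    · simp
    · rw [Function.update_of_ne h]
      exact hzero j ((mem_insert.1 hj).resolve_left h)
  · have : p x * sw x ≤ sw x := mul_le_of_le_one_left (Nat.cast_nonneg _) (hbounds x).2
    rw [sum_insert hx, sum_update_zero_mul]
    linarith

lemma FracFeasible.exists_of_empty {p : Fin m → ℝ} (hp : FracFeasible sw f ∅ p)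
    (W : Finset (Fin m)) : ∃ q, FracFeasible sw f W q := by
  induction W using Finset.induction_on with
  | empty => exact ⟨p, hp⟩
  | insert x W hx ih =>
    obtain ⟨q, hq⟩ := ih
    exact ⟨_, hq.update_insert hx⟩

lemma resid_le_cost (hc : ∀ j, 0 ≤ c j) {W : Finset (Fin m)} {p : Fin m → ℝ}
    (hp : FracFeasible sw f W p) : resid c sw f W ≤ ∑ j, p j * c j := by
  refine csInf_le ⟨0, ?_⟩ ⟨p, hp, rfl⟩
  rintro _ ⟨q, hq, rfl⟩
  exact sum_nonneg fun j _ => mul_nonneg (hq.1 j).1 (hc j)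

lemma resid_insert_le_cost_sub (hc : ∀ j, 0 ≤ c j) {W : Finset (Fin m)} {p : Fin m → ℝ}
    {x : Fin m} (hp : FracFeasible sw f W p) (hx : x ∉ W) :
    resid c sw f (insert x W) ≤ ∑ j, p j * c j - p x * c x := by
  simpa only [sum_update_zero_mul] using resid_le_cost c hc (hp.update_insert hx)

lemma resid_insert_le (hc : ∀ j, 0 ≤ c j) {W : Finset (Fin m)} {x : Fin m} (hx : x ∉ W)
    (hW : ∃ p, FracFeasible sw f W p) : resid c sw f (insert x W) ≤ resid c sw f W := by
  obtain ⟨p, hp⟩ := hW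
  refine le_csInf ⟨_, p, hp, rfl⟩ ?_
  rintro _ ⟨q, hq, rfl⟩
  have := mul_nonneg (hq.1 x).1 (hc x)
  linarith [resid_insert_le_cost_sub c hc hq hx]

end Coverage

lemma FracFeasible.sum_mul_le_sup {m : ℕ} {sw : Fin m → ℕ} {f : ℝ} {W : Finset (Fin m)}
    {p : Fin m → ℝ} (hp : FracFeasible sw f W p) {j₀ : Fin m}
    (hint : ∀ j, j ≠ j₀ → p j = 0 ∨ p j = 1) (hfull : ∀ x ∉ W, p x ≠ 1) :
    ∑ j, p j * sw j ≤ ((univ \ W).sup sw : ℕ) := by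
  have hzero : ∀ j, j ≠ j₀ → p j = 0 := fun j hj =>
    (hint j hj).resolve_right fun h1 =>
      if hjW : j ∈ W then by simp [hp.2.1 j hjW] at h1 else hfull j hjW h1
  rw [sum_eq_single j₀ (fun j _ hj => by rw [hzero j hj, zero_mul]) (by simp)]
  by_cases hj₀W : j₀ ∈ W
  · rw [hp.2.1 j₀ hj₀W, zero_mul]
    exact Nat.cast_nonneg _
  · have hle : (sw j₀ : ℝ) ≤ ((univ \ W).sup sw : ℕ) := by
      exact_mod_cast le_sup (mem_sdiff.2 ⟨mem_univ j₀, hj₀W⟩)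
    exact (mul_le_of_le_one_left (Nat.cast_nonneg _) (hp.1 j₀).2).trans hle

lemma coverTot_add_le_of_resid_le {m k : ℕ} (c : Fin m → ℝ) (sw : Fin k → Fin m → ℕ)
    (f bd : Fin k → ℝ) {W W' : Finset (Fin m)} {δ : ℝ} (i₀ : Fin k)
    (hle : ∀ i, resid c (sw i) (f i) W' ≤ resid c (sw i) (f i) W)
    (hle₀ : resid c (sw i₀) (f i₀) W' ≤ resid c (sw i₀) (f i₀) W - δ) :
    coverTot c sw f bd W + δ ≤ coverTot c sw f bd W' := by
  have hδ : δ ≤ ∑ i, (resid c (sw i) (f i) W - resid c (sw i) (f i) W') :=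
    (le_sub_comm.1 hle₀).trans
      (single_le_sum (fun i _ => sub_nonneg.2 (hle i)) (mem_univ i₀))
  simp only [coverTot, sum_sub_distrib] at hδ ⊢
  linarith

theorem non_DF1_coverage_increase_general
    {m k : ℕ} (c : Fin m → ℝ) (sw : Fin k → Fin m → ℕ) (f bd : Fin k → ℝ)
    (hc : ∀ j, 0 ≤ c j)
    (hach : ∀ i, ∃ p, FracFeasible (sw i) (f i) ∅ p ∧ ∑ j, p j * c j ≤ bd i)
    (hwit : ∀ i (W : Finset (Fin m)), (∃ p, FracFeasible (sw i) (f i) W p) →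
      ∃ p, FracFeasible (sw i) (f i) W p ∧
        (∑ j, p j * c j) = resid c (sw i) (f i) W ∧
        ∃ j₀, ∀ j, j ≠ j₀ → p j = 0 ∨ p j = 1)
    (W : Finset (Fin m)) (hW : ¬ DF1 sw f W) :
    ∃ x ∉ W, coverTot c sw f bd W + c x ≤ coverTot c sw f bd (insert x W) := by
  obtain ⟨i₀, hi₀⟩ : ∃ i₀, ∑ j ∈ W, (sw i₀ j : ℝ) + ((univ \ W).sup (sw i₀) : ℕ) < f i₀ := by
    simpa [DF1] using hW
  have hfeas : ∀ i, ∃ p, FracFeasible (sw i) (f i) W p := fun i =>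
    (hach i).elim fun _ hp => hp.1.exists_of_empty W
  obtain ⟨p, hp, hpcost, j₀, hint⟩ := hwit i₀ W (hfeas i₀)
  obtain ⟨x, hxW, hpx⟩ : ∃ x ∉ W, p x = 1 := by
    by_contra! hfull
    linarith [hp.2.2, hp.sum_mul_le_sup hint hfull]
  refine ⟨x, hxW, coverTot_add_le_of_resid_le c sw f bd i₀
    (fun i => resid_insert_le c hc hxW (hfeas i)) ?_⟩
  simpa only [hpx, one_mul, hpcost] using resid_insert_le_cost_sub c hc hp hxW

/-- if `W` is not DF1, some project's addition increases the
total coverage by at least its cost. -/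
theorem non_DF1_coverage_increase
    {m k : ℕ} (c : Fin m → ℝ) (sw : Fin k → Fin m → ℕ) (f bd : Fin k → ℝ)
    (hc : ∀ j, 0 ≤ c j) (hf : ∀ i, 0 ≤ f i)
    (hach : ∀ i, ∃ p, FracFeasible (sw i) (f i) ∅ p ∧ ∑ j, p j * c j ≤ bd i)
    (hwit : ∀ i (W : Finset (Fin m)), (∃ p, FracFeasible (sw i) (f i) W p) →
      ∃ p, FracFeasible (sw i) (f i) W p ∧
        (∑ j, p j * c j) = resid c (sw i) (f i) W ∧
        ∃ j₀, ∀ j, j ≠ j₀ → p j = 0 ∨ p j = 1)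
    (W : Finset (Fin m)) (hW : ¬ DF1 sw f W) :
    ∃ x ∉ W, coverTot c sw f bd W + c x ≤ coverTot c sw f bd (insert x W) :=
  non_DF1_coverage_increase_general c sw f bd hc hach hwit W hW
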